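/- (Claim 5, second part) Let k ≥ 2, n ≥ 2 be integers and let A' ⊆ [k]^n be a compressed set such that |B_{≥r+1}| < |A'| ≤ |B_{≥r}| for some 0 ≤ r ≤ n. Then there exists a compressed set A ⊆ [k]^n with |A| = |A'|, B_{≥r+1} ⊆ A ⊆ B_{≥r}, and |d(A')| ≥ |d(A)|. -/

import Mathlib

/-!
The `≤`-order is the pullback of a lexicographic order (more zeros first, then the colex orders
of the level sets `R_i`, read from the top value down), so it is linear and unchanged by inserting
a common coordinate; `C_s`-compressedness then says that `A` is closed under going down in the
`≤`-order inside every slice `{x : x_s = t}`.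

The key fact: if `A` is compressed and `x₀ ∈ A`, every point with at least `|R_0(x₀)| + 2` zeros
lies in `d(A)`. With `x₀ ∈ A'` having at most `r` zeros this gives
`d(B_{≥r+1}) ⊆ B_{≥r+2} ⊆ d(A')`. We take `A = B_{≥r+1} ∪ S` with `S ⊆ B_r` closed downwards
in every slice of `B_r`, cut down to the right size from `B_r` or from `A' ∩ B_r` by removing
`≤`-maximal points, and chosen so that `d(S) ⊆ d(A')`.
-/

open Finset
open scoped Classical

/-- `R_i(x)`: the set of coordinates of `x` equal to `i`.
The ambient alphabet is `[k+1] = {0,…,k}`. -/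
noncomputable def rset {k N : ℕ} (x : Fin N → Fin (k + 1)) (i : ℕ) : Finset (Fin N) :=
  Finset.univ.filter fun j => (x j : ℕ) = i

/-- the strict binary order on finite sets of coordinates:
`X <_bin Y` iff `X ≠ Y` and `max (X Δ Y) ∈ Y`. -/
def binLT {N : ℕ} (X Y : Finset (Fin N)) : Prop :=
  ∃ m ∈ Y, m ∉ X ∧ ∀ j : Fin N, ((j ∈ X ∧ j ∉ Y) ∨ (j ∈ Y ∧ j ∉ X)) → j ≤ m

/-- the strict `≤`-order on `[k+1]^N`: `x < y` iff `|R_0(x)| > |R_0(y)|`, or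
`|R_0(x)| = |R_0(y)|` and for the largest `i` with `R_i(x) ≠ R_i(y)` we have
`max (R_i(x) Δ R_i(y)) ∈ R_i(y)`. -/
def plt {k N : ℕ} (x y : Fin N → Fin (k + 1)) : Prop :=
  (rset y 0).card < (rset x 0).card ∨
    ((rset x 0).card = (rset y 0).card ∧
      ∃ i : ℕ, binLT (rset x i) (rset y i) ∧ ∀ j : ℕ, i < j → rset x j = rset y j)

/-- the `≤`-order on `[k+1]^N`. -/
def ple {k N : ℕ} (x y : Fin N → Fin (k + 1)) : Prop := x = y ∨ plt x y

/-- `B` is an initial segment of the `≤`-order. -/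
def isInitSeg {k N : ℕ} (B : Finset (Fin N → Fin (k + 1))) : Prop :=
  ∀ y ∈ B, ∀ x, ple x y → x ∈ B

/-- the `d`-shadow: all points obtained from a point of `A` by flipping one
nonzero coordinate to `0`. -/
noncomputable def dShadow {k N : ℕ} (A : Finset (Fin N → Fin (k + 1))) :
    Finset (Fin N → Fin (k + 1)) :=
  A.biUnion fun x =>
    (Finset.univ.filter fun i => x i ≠ 0).image fun i => Function.update x i 0

/-- the initial segment of the `≤`-order on `[k+1]^N` of cardinality `m`. -/
noncomputable def initSeg (k N m : ℕ) : Finset (Fin N → Fin (k + 1)) :=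
  Finset.univ.filter fun x => (Finset.univ.filter fun y => ple y x).card ≤ m

/-- the `C_s`-compression of `A ⊆ [k+1]^(n+1)`: replace each slice
`A_{s,t} = {y : t_s y ∈ A}` by the initial segment of the same size. -/
noncomputable def compress {k n : ℕ} (s : Fin (n + 1)) (A : Finset (Fin (n + 1) → Fin (k + 1))) :
    Finset (Fin (n + 1) → Fin (k + 1)) :=
  Finset.univ.biUnion fun t : Fin (k + 1) =>
    (initSeg k n
        (Finset.univ.filter fun y : Fin n → Fin (k + 1) => s.insertNth t y ∈ A).card).image
      fun y => s.insertNth t y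

/-- `A` is compressed if every `C_s`-compression fixes it. -/
def IsCompressed {k n : ℕ} (A : Finset (Fin (n + 1) → Fin (k + 1))) : Prop :=
  ∀ s : Fin (n + 1), compress s A = A

/-- `B_r`: points with exactly `r` zero coordinates. -/
noncomputable def Bexact (k N r : ℕ) : Finset (Fin N → Fin (k + 1)) :=
  Finset.univ.filter fun x => (rset x 0).card = r

/-- `B_{≥r}`: points with at least `r` zero coordinates. -/
noncomputable def Bge (k N r : ℕ) : Finset (Fin N → Fin (k + 1)) :=
  Finset.univ.filter fun x => r ≤ (rset x 0).card

/-- `m(x)`: the largest coordinate value of `x`. -/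
noncomputable def mval {k N : ℕ} (x : Fin N → Fin (k + 1)) : ℕ :=
  Finset.univ.sup fun i => (x i : ℕ)

/-- the class `C_X`: points with maximal coordinate `s`, attained exactly on `X`,
and exactly `r` zero coordinates. -/
noncomputable def classSet (k N s r : ℕ) (X : Finset (Fin N)) : Finset (Fin N → Fin (k + 1)) :=
  Finset.univ.filter fun x => mval x = s ∧ rset x s = X ∧ (rset x 0).card = r

/-- `[m]^N = {0,…,m−1}^N`. -/
noncomputable def box (k N m : ℕ) : Finset (Fin N → Fin (k + 1)) :=
  Finset.univ.filter fun x => ∀ i, (x i : ℕ) < m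

/-- `{1,…,s−1}^N`. -/
noncomputable def box1 (k N s : ℕ) : Finset (Fin N → Fin (k + 1)) :=
  Finset.univ.filter fun x => ∀ i, 1 ≤ (x i : ℕ) ∧ (x i : ℕ) ≤ s - 1

/-- `B` is a down-set. -/
def isDownSet {k N : ℕ} (B : Finset (Fin N → Fin (k + 1))) : Prop :=
  ∀ y ∈ B, ∀ x : Fin N → Fin (k + 1), (∀ j, (x j : ℕ) ≤ (y j : ℕ)) → x ∈ B

lemma Finset.Colex.toColex_image_union_lt_iff {α β : Type*} [LinearOrder α] [LinearOrder β]
    {f : α → β} (hf : StrictMono f) {u : Finset β} (hu : ∀ a, f a ∉ u) {s t : Finset α} :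
    toColex (s.image f ∪ u) < toColex (t.image f ∪ u) ↔ toColex s < toColex t := by
  have hdisj : ∀ v : Finset α, Disjoint (v.image f) u :=
    fun v => Finset.disjoint_left.2 fun b hb => by
      obtain ⟨a, -, rfl⟩ := Finset.mem_image.1 hb; exact hu a
  rw [← Finset.Colex.toColex_sdiff_lt_toColex_sdiff Finset.subset_union_right
    Finset.subset_union_right, Finset.union_sdiff_cancel_right (hdisj s),
    Finset.union_sdiff_cancel_right (hdisj t), Finset.Colex.toColex_image_lt_toColex_image hf]

lemma Pi.toColex_lt_toColex_map_iff {ι : Type*} [LT ι] {β γ : ι → Type*}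
    [∀ i, LinearOrder (β i)] [∀ i, Preorder (γ i)] {g : ∀ i, β i → γ i}
    (hg : ∀ i, StrictMono (g i)) {x y : ∀ i, β i} :
    toColex (fun i => g i (x i)) < toColex (fun i => g i (y i)) ↔ toColex x < toColex y :=
  exists_congr fun i => and_congr
    (forall_congr' fun j => imp_congr_right fun _ => (hg j).injective.eq_iff) (hg i).lt_iff_lt

section Order

open OrderDual

variable {k N : ℕ}

lemma mem_rset {x : Fin N → Fin (k + 1)} {i : ℕ} {j : Fin N} :
    j ∈ rset x i ↔ (x j : ℕ) = i := by
  simp [rset]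

lemma rset_eq_empty_of_lt (x : Fin N → Fin (k + 1)) {i : ℕ} (h : k < i) : rset x i = ∅ := by
  ext j
  simp only [mem_rset, Finset.notMem_empty, iff_false]
  have := (x j).isLt
  omega

open scoped symmDiff in
lemma binLT_iff_toColex_lt {X Y : Finset (Fin N)} : binLT X Y ↔ toColex X < toColex Y := by
  rw [Finset.Colex.toColex_lt_toColex_iff_max'_mem]
  constructor
  · rintro ⟨m, hmY, hmX, hm⟩
    refine ⟨fun h => hmX (h ▸ hmY), ?_⟩
    convert hmY
    refine le_antisymm (Finset.max'_le _ _ _ fun j hj => hm j (Finset.mem_symmDiff.1 hj)) ?_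
    exact Finset.le_max' _ _ (Finset.mem_symmDiff.2 (Or.inr ⟨hmY, hmX⟩))
  · rintro ⟨hne, hmY⟩
    have hm := Finset.max'_mem _ (symmDiff_nonempty.2 hne)
    refine ⟨_, hmY, ?_, fun j hj => Finset.le_max' _ _ (Finset.mem_symmDiff.2 hj)⟩
    rcases Finset.mem_symmDiff.1 hm with h | h
    exacts [absurd hmY h.2, h.2]

noncomputable def pleKey (x : Fin N → Fin (k + 1)) :
    ℕᵒᵈ ×ₗ Colex (Fin (k + 1) → Colex (Finset (Fin N))) :=
  toLex (toDual (rset x 0).card, toColex fun i => toColex (rset x i))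

lemma pleKey_injective : Function.Injective (pleKey (k := k) (N := N)) := by
  intro x y h
  funext j
  have hj : j ∈ rset y (x j) := by
    have hx : toColex (rset x (x j)) = toColex (rset y (x j)) :=
      congrFun (congrArg (fun p => ofColex (ofLex p).2) h) (x j)
    rw [← toColex_inj.1 hx]
    exact mem_rset.2 rfl
  exact Fin.val_injective (mem_rset.1 hj).symm

lemma plt_iff_pleKey_lt {x y : Fin N → Fin (k + 1)} : plt x y ↔ pleKey x < pleKey y := by
  rw [pleKey, pleKey, Prod.Lex.toLex_lt_toLex, toDual_lt_toDual]
  refine or_congr Iff.rfl (and_congr Iff.rfl ?_)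
  change _ ↔ ∃ i : Fin (k + 1), (∀ j, i < j → toColex (rset x j) = toColex (rset y j)) ∧
    toColex (rset x i) < toColex (rset y i)
  constructor
  · rintro ⟨i, hlt, heq⟩
    have hi : i < k + 1 := by
      by_contra hi
      obtain ⟨m, hm, -⟩ := hlt
      simp [rset_eq_empty_of_lt y (by omega : k < i)] at hm
    exact ⟨⟨i, hi⟩, fun j hj => congrArg toColex (heq j hj), binLT_iff_toColex_lt.1 hlt⟩
  · rintro ⟨i, heq, hlt⟩
    refine ⟨i, binLT_iff_toColex_lt.2 hlt, fun j hj => ?_⟩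
    by_cases hjk : j < k + 1
    · exact toColex_inj.1 (heq ⟨j, hjk⟩ hj)
    · rw [rset_eq_empty_of_lt x (by omega), rset_eq_empty_of_lt y (by omega)]

lemma ple_iff_pleKey_le {x y : Fin N → Fin (k + 1)} : ple x y ↔ pleKey x ≤ pleKey y := by
  rw [ple, plt_iff_pleKey_lt, le_iff_eq_or_lt, pleKey_injective.eq_iff]

lemma ple_refl (x : Fin N → Fin (k + 1)) : ple x x := Or.inl rfl

lemma ple_trans {x y z : Fin N → Fin (k + 1)} (hxy : ple x y) (hyz : ple y z) : ple x z :=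
  ple_iff_pleKey_le.2 ((ple_iff_pleKey_le.1 hxy).trans (ple_iff_pleKey_le.1 hyz))

lemma ple_total (x y : Fin N → Fin (k + 1)) : ple x y ∨ ple y x :=
  (le_total (pleKey x) (pleKey y)).imp ple_iff_pleKey_le.2 ple_iff_pleKey_le.2

lemma ple_antisymm {x y : Fin N → Fin (k + 1)} (hxy : ple x y) (hyx : ple y x) : x = y :=
  pleKey_injective (le_antisymm (ple_iff_pleKey_le.1 hxy) (ple_iff_pleKey_le.1 hyx))

lemma card_rset_zero_le_of_ple {x y : Fin N → Fin (k + 1)} (h : ple x y) :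
    (rset y 0).card ≤ (rset x 0).card :=
  toDual_le_toDual.1 (Prod.Lex.monotone_fst _ _ (ple_iff_pleKey_le.1 h))

end Order

section InsertNth

open OrderDual

variable {k n : ℕ}

lemma rset_insertNth (s : Fin (n + 1)) (t : Fin (k + 1)) (y : Fin n → Fin (k + 1)) (i : ℕ) :
    rset (s.insertNth t y) i = (rset y i).image s.succAbove ∪ if (t : ℕ) = i then {s} else ∅ := by
  ext j
  rcases Fin.eq_self_or_eq_succAbove s j with rfl | ⟨a, rfl⟩
  · split_ifs <;> simp_all [mem_rset, Fin.succAbove_ne]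
  · split_ifs <;> simp [mem_rset, Fin.succAbove_ne, Fin.succAbove_right_injective.eq_iff]

lemma card_rset_insertNth_zero (s : Fin (n + 1)) (t : Fin (k + 1)) (y : Fin n → Fin (k + 1)) :
    (rset (s.insertNth t y) 0).card = (rset y 0).card + if (t : ℕ) = 0 then 1 else 0 := by
  rw [rset_insertNth, Finset.card_union_of_disjoint, Finset.card_image_of_injective _
    (Fin.succAbove_right_injective)]
  · split_ifs <;> simp
  · split_ifs <;> simp [Fin.succAbove_ne]

lemma pleKey_insertNth_lt_iff {s : Fin (n + 1)} {t : Fin (k + 1)} {a b : Fin n → Fin (k + 1)} :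
    pleKey (s.insertNth t a) < pleKey (s.insertNth t b) ↔ pleKey a < pleKey b := by
  have hlevels : ∀ y : Fin n → Fin (k + 1),
      (fun i : Fin (k + 1) => toColex (rset (s.insertNth t y) i)) =
        fun i : Fin (k + 1) => toColex ((ofColex (toColex (rset y i))).image s.succAbove ∪
          if (t : ℕ) = (i : ℕ) then {s} else ∅) :=
    fun y => funext fun i => by rw [rset_insertNth]; rfl
  have hmono : ∀ i : Fin (k + 1), StrictMono fun X : Colex (Finset (Fin n)) =>
      toColex ((ofColex X).image s.succAbove ∪ if (t : ℕ) = (i : ℕ) then {s} else ∅) :=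
    fun i X Y hXY => (Finset.Colex.toColex_image_union_lt_iff (Fin.strictMono_succAbove s)
      (fun a => by split_ifs <;> simp [Fin.succAbove_ne])).2 hXY
  simp only [pleKey, Prod.Lex.toLex_lt_toLex, toDual_lt_toDual, toDual_inj,
    card_rset_insertNth_zero, hlevels, Pi.toColex_lt_toColex_map_iff hmono]
  rw [add_lt_add_iff_right, add_left_inj]

lemma ple_insertNth_iff {s : Fin (n + 1)} {t : Fin (k + 1)} {a b : Fin n → Fin (k + 1)} :
    ple (s.insertNth t a) (s.insertNth t b) ↔ ple a b := by
  rw [ple_iff_pleKey_le, ple_iff_pleKey_le]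
  exact not_lt.symm.trans (pleKey_insertNth_lt_iff.not.trans not_lt)

end InsertNth

section Compression

variable {k n : ℕ}

noncomputable def coordSlice (s : Fin (n + 1)) (t : Fin (k + 1))
    (A : Finset (Fin (n + 1) → Fin (k + 1))) : Finset (Fin n → Fin (k + 1)) :=
  Finset.univ.filter fun y => s.insertNth t y ∈ A

lemma mem_coordSlice {s : Fin (n + 1)} {t : Fin (k + 1)} {A : Finset (Fin (n + 1) → Fin (k + 1))}
    {y : Fin n → Fin (k + 1)} : y ∈ coordSlice s t A ↔ s.insertNth t y ∈ A := by
  simp [coordSlice]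

lemma mem_initSeg {N m : ℕ} {x : Fin N → Fin (k + 1)} :
    x ∈ initSeg k N m ↔ (Finset.univ.filter fun y => ple y x).card ≤ m := by
  simp [initSeg]

lemma isInitSeg_initSeg (k N m : ℕ) : isInitSeg (initSeg k N m) := by
  intro y hy x hxy
  rw [mem_initSeg] at hy ⊢
  refine le_trans (Finset.card_le_card fun z hz => ?_) hy
  simp only [Finset.mem_filter, Finset.mem_univ, true_and] at hz ⊢
  exact ple_trans hz hxy

lemma isInitSeg.eq_initSeg {N : ℕ} {D : Finset (Fin N → Fin (k + 1))} (hD : isInitSeg D) :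
    D = initSeg k N D.card := by
  ext x
  rw [mem_initSeg]
  constructor
  · intro hx
    exact Finset.card_le_card fun y hy => hD x hx y (Finset.mem_filter.1 hy).2
  · intro hcard
    by_contra hx
    have hsub : D ⊂ Finset.univ.filter fun y => ple y x := by
      refine (Finset.ssubset_iff_of_subset fun y hy => ?_).2 ⟨x, by simp [ple_refl], hx⟩
      simp only [Finset.mem_filter, Finset.mem_univ, true_and]
      exact (ple_total y x).resolve_right fun h => hx (hD y hy x h)
    exact (Finset.card_lt_card hsub).not_ge hcard

lemma mem_compress {s : Fin (n + 1)} {A : Finset (Fin (n + 1) → Fin (k + 1))}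
    {x : Fin (n + 1) → Fin (k + 1)} :
    x ∈ compress s A ↔ s.removeNth x ∈ initSeg k n (coordSlice s (x s) A).card := by
  simp only [compress, Finset.mem_biUnion, Finset.mem_image, Finset.mem_univ, true_and]
  constructor
  · rintro ⟨t, y, hy, rfl⟩
    rwa [Fin.insertNth_apply_same, Fin.removeNth_insertNth]
  · exact fun h => ⟨x s, s.removeNth x, h, Fin.insertNth_self_removeNth s x⟩

lemma isCompressed_iff_isInitSeg_coordSlice {A : Finset (Fin (n + 1) → Fin (k + 1))} :
    IsCompressed A ↔ ∀ s t, isInitSeg (coordSlice s t A) := by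
  constructor
  · intro hA s t
    have hslice : coordSlice s t A = initSeg k n (coordSlice s t A).card := by
      conv_lhs => rw [← hA s]
      ext y
      rw [mem_coordSlice, mem_compress, Fin.insertNth_apply_same, Fin.removeNth_insertNth]
    rw [hslice]
    exact isInitSeg_initSeg _ _ _
  · intro h s
    ext x
    rw [mem_compress, ← (h s (x s)).eq_initSeg, mem_coordSlice, Fin.insertNth_self_removeNth]

lemma isCompressed_iff_forall_ple {A : Finset (Fin (n + 1) → Fin (k + 1))} :
    IsCompressed A ↔ ∀ x ∈ A, ∀ (s : Fin (n + 1)) y, y s = x s → ple y x → y ∈ A := by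
  rw [isCompressed_iff_isInitSeg_coordSlice]
  constructor
  · intro hA x hx s y hs hyx
    have hx' : s.removeNth x ∈ coordSlice s (x s) A := by
      rwa [mem_coordSlice, Fin.insertNth_self_removeNth]
    have hyx' : ple (s.removeNth y) (s.removeNth x) := by
      rwa [← ple_insertNth_iff (s := s) (t := x s), Fin.insertNth_self_removeNth, ← hs,
        Fin.insertNth_self_removeNth]
    have := mem_coordSlice.1 (hA s (x s) _ hx' _ hyx')
    rwa [← hs, Fin.insertNth_self_removeNth] at this
  · intro hA s t b hb a hab
    refine mem_coordSlice.2 (hA _ (mem_coordSlice.1 hb) s _ ?_ (ple_insertNth_iff.2 hab))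
    simp

end Compression

section Shadow

variable {k N : ℕ}

lemma mem_dShadow {A : Finset (Fin N → Fin (k + 1))} {z : Fin N → Fin (k + 1)} :
    z ∈ dShadow A ↔ ∃ x ∈ A, ∃ i, x i ≠ 0 ∧ Function.update x i 0 = z := by
  simp [dShadow]

lemma dShadow_mono {A B : Finset (Fin N → Fin (k + 1))} (h : A ⊆ B) : dShadow A ⊆ dShadow B :=
  Finset.biUnion_subset_biUnion_of_subset_left _ h

lemma dShadow_union (A B : Finset (Fin N → Fin (k + 1))) :
    dShadow (A ∪ B) = dShadow A ∪ dShadow B :=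
  Finset.union_biUnion

lemma card_rset_update_zero {x : Fin N → Fin (k + 1)} {i : Fin N} (h : x i ≠ 0) :
    (rset (Function.update x i 0) 0).card = (rset x 0).card + 1 := by
  have hins : rset (Function.update x i 0) 0 = insert i (rset x 0) := by
    ext j
    rcases eq_or_ne j i with rfl | hj
    · simp [mem_rset]
    · simp [mem_rset, hj]
  rw [hins, Finset.card_insert_of_notMem (by simpa [mem_rset, Fin.val_eq_zero_iff] using h)]

lemma mem_Bge {r : ℕ} {x : Fin N → Fin (k + 1)} : x ∈ Bge k N r ↔ r ≤ (rset x 0).card := by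
  simp [Bge]

lemma mem_Bexact {r : ℕ} {x : Fin N → Fin (k + 1)} :
    x ∈ Bexact k N r ↔ (rset x 0).card = r := by
  simp [Bexact]

lemma dShadow_subset_Bge {r : ℕ} {A : Finset (Fin N → Fin (k + 1))} (h : A ⊆ Bge k N r) :
    dShadow A ⊆ Bge k N (r + 1) := by
  intro z hz
  obtain ⟨x, hx, i, hi, rfl⟩ := mem_dShadow.1 hz
  rw [mem_Bge, card_rset_update_zero hi, add_le_add_iff_right]
  exact mem_Bge.1 (h hx)

/-- Raising a zero coordinate `p` of `y` (with `x₀ p ≠ 0`) to `x₀ p` gives a point with more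
zeros than `x₀`, hence below `x₀` in the slice through `p`; `y` lies in its shadow. -/
lemma IsCompressed.mem_dShadow_of_add_two_le {n : ℕ} {A : Finset (Fin (n + 1) → Fin (k + 1))}
    (hA : IsCompressed A) {x₀ y : Fin (n + 1) → Fin (k + 1)} (hx₀ : x₀ ∈ A)
    (hy : (rset x₀ 0).card + 2 ≤ (rset y 0).card) : y ∈ dShadow A := by
  obtain ⟨p, hpy, hpx⟩ : ∃ p ∈ rset y 0, p ∉ rset x₀ 0 :=
    Finset.not_subset.1 fun h => by have := Finset.card_le_card h; omega
  have hpx : x₀ p ≠ 0 := by simpa [mem_rset, Fin.val_eq_zero_iff] using hpx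
  set w := Function.update y p (x₀ p)
  have hwp : w p = x₀ p := Function.update_self p (x₀ p) y
  have hyw : Function.update w p 0 = y := by
    rw [Function.update_idem, ← Fin.val_eq_zero_iff.1 (mem_rset.1 hpy), Function.update_eq_self]
  have hwA : w ∈ A := by
    refine isCompressed_iff_forall_ple.1 hA x₀ hx₀ p w hwp (Or.inr (Or.inl ?_))
    have := card_rset_update_zero (hwp ▸ hpx : w p ≠ 0)
    rw [hyw] at this
    omega
  exact mem_dShadow.2 ⟨w, hwA, p, hwp ▸ hpx, hyw⟩

end Shadow

section Layer

variable {k n r : ℕ}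

def IsLayerCompressed (r : ℕ) (S : Finset (Fin (n + 1) → Fin (k + 1))) : Prop :=
  S ⊆ Bexact k (n + 1) r ∧
    ∀ x ∈ S, ∀ (s : Fin (n + 1)) y, y ∈ Bexact k (n + 1) r → y s = x s → ple y x → y ∈ S

lemma isLayerCompressed_Bexact : IsLayerCompressed (k := k) (n := n) r (Bexact k (n + 1) r) :=
  ⟨subset_rfl, fun _ _ _ _ hy _ _ => hy⟩

lemma IsCompressed.isLayerCompressed_inter_Bexact {A : Finset (Fin (n + 1) → Fin (k + 1))}
    (hA : IsCompressed A) : IsLayerCompressed r (A ∩ Bexact k (n + 1) r) :=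
  ⟨Finset.inter_subset_right, fun x hx s y hy hs hyx => Finset.mem_inter.2
    ⟨isCompressed_iff_forall_ple.1 hA x (Finset.mem_inter.1 hx).1 s y hs hyx, hy⟩⟩

lemma IsLayerCompressed.erase {T : Finset (Fin (n + 1) → Fin (k + 1))}
    (hT : IsLayerCompressed r T) {z : Fin (n + 1) → Fin (k + 1)} (hz : ∀ x ∈ T, ple x z) :
    IsLayerCompressed r (T.erase z) := by
  refine ⟨(Finset.erase_subset z T).trans hT.1, fun x hx s y hy hs hyx => ?_⟩
  obtain ⟨hxz, hxT⟩ := Finset.mem_erase.1 hx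
  refine Finset.mem_erase.2 ⟨?_, hT.2 x hxT s y hy hs hyx⟩
  rintro rfl
  exact hxz (ple_antisymm (hz x hxT) hyx)

lemma IsLayerCompressed.exists_subset_card_eq {T : Finset (Fin (n + 1) → Fin (k + 1))}
    (hT : IsLayerCompressed r T) {m : ℕ} (hm : m ≤ T.card) :
    ∃ S ⊆ T, IsLayerCompressed r S ∧ S.card = m := by
  induction T using Finset.strongInduction with
  | H T ih =>
    rcases hm.eq_or_lt with rfl | hlt
    · exact ⟨T, subset_rfl, hT, rfl⟩
    obtain ⟨z, hz, hmax⟩ := T.exists_max_image pleKey (Finset.card_pos.1 (by omega))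
    have hT' := hT.erase fun x hx => ple_iff_pleKey_le.2 (hmax x hx)
    obtain ⟨S, hST, hS, hScard⟩ := ih _ (Finset.erase_ssubset hz) hT'
      (by rw [Finset.card_erase_of_mem hz]; omega)
    exact ⟨S, hST.trans (Finset.erase_subset z T), hS, hScard⟩

lemma IsLayerCompressed.isCompressed_Bge_union {S : Finset (Fin (n + 1) → Fin (k + 1))}
    (hS : IsLayerCompressed r S) : IsCompressed (Bge k (n + 1) (r + 1) ∪ S) := by
  refine isCompressed_iff_forall_ple.2 fun x hx s y hs hyx => ?_
  have hzeros := card_rset_zero_le_of_ple hyx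
  rcases Finset.mem_union.1 hx with hx | hx
  · exact Finset.mem_union_left _ (mem_Bge.2 ((mem_Bge.1 hx).trans hzeros))
  · have hxr := mem_Bexact.1 (hS.1 hx)
    rcases hzeros.eq_or_lt with heq | hlt
    · exact Finset.mem_union_right _ (hS.2 x hx s y (mem_Bexact.2 (heq ▸ hxr)) hs hyx)
    · exact Finset.mem_union_left _ (mem_Bge.2 (by omega))

/-- If `A` has a point with fewer than `r` zeros, the shadow of `A` contains all of `B_{≥r+1}`
and `T = B_r` works; otherwise `A ⊆ B_{≥r}` and `T = A ∩ B_r` works. -/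
lemma IsCompressed.exists_isLayerCompressed {A : Finset (Fin (n + 1) → Fin (k + 1))}
    (hA : IsCompressed A) (hA_le : A.card ≤ (Bge k (n + 1) r).card) :
    ∃ T, IsLayerCompressed r T ∧ A.card - (Bge k (n + 1) (r + 1)).card ≤ T.card ∧
      dShadow T ⊆ dShadow A := by
  by_cases hlow : ∃ x ∈ A, (rset x 0).card < r
  · obtain ⟨x, hx, hxr⟩ := hlow
    refine ⟨Bexact k (n + 1) r, isLayerCompressed_Bexact, ?_, fun z hz => ?_⟩
    · have hsplit : (Bge k (n + 1) r).card =
          (Bexact k (n + 1) r).card + (Bge k (n + 1) (r + 1)).card := by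
        rw [← Finset.card_union_of_disjoint]
        · congr 1
          ext y
          simp only [Finset.mem_union, mem_Bge, mem_Bexact]
          omega
        · exact Finset.disjoint_left.2 fun y hy hy' => by
            rw [mem_Bexact] at hy; rw [mem_Bge] at hy'; omega
      omega
    · have := mem_Bge.1 (dShadow_subset_Bge (fun y hy => mem_Bge.2 (mem_Bexact.1 hy).ge) hz)
      exact hA.mem_dShadow_of_add_two_le hx (by omega)
  · push Not at hlow
    refine ⟨A ∩ Bexact k (n + 1) r, hA.isLayerCompressed_inter_Bexact, ?_,
      dShadow_mono Finset.inter_subset_left⟩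
    have hcover : A ⊆ A ∩ Bexact k (n + 1) r ∪ Bge k (n + 1) (r + 1) := fun x hx => by
      have := hlow x hx
      simp only [Finset.mem_union, Finset.mem_inter, mem_Bexact, mem_Bge, hx, true_and]
      omega
    have := (Finset.card_le_card hcover).trans (Finset.card_union_le _ _)
    omega

end Layer

theorem claim5_second_general (k n r : ℕ)
    (A' : Finset (Fin (n + 1) → Fin (k + 1))) (hA' : IsCompressed A')
    (h1 : (Bge k (n + 1) (r + 1)).card < A'.card)
    (h2 : A'.card ≤ (Bge k (n + 1) r).card) :
    ∃ A : Finset (Fin (n + 1) → Fin (k + 1)),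
      IsCompressed A ∧ A.card = A'.card ∧
      Bge k (n + 1) (r + 1) ⊆ A ∧ A ⊆ Bge k (n + 1) r ∧
      (dShadow A).card ≤ (dShadow A').card := by
  obtain ⟨x₀, hx₀, hx₀r⟩ : ∃ x₀ ∈ A', (rset x₀ 0).card ≤ r := by
    by_contra! h
    exact h1.not_ge (Finset.card_le_card fun x hx => mem_Bge.2 (h x hx))
  obtain ⟨T, hT, hTcard, hTshadow⟩ := hA'.exists_isLayerCompressed h2
  obtain ⟨S, hST, hS, hScard⟩ := hT.exists_subset_card_eq hTcard
  have hS_Bge : ∀ x ∈ S, x ∈ Bge k (n + 1) r := fun x hx => mem_Bge.2 (mem_Bexact.1 (hS.1 hx)).ge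
  have hdisj : Disjoint (Bge k (n + 1) (r + 1)) S := Finset.disjoint_right.2 fun x hx hx' => by
    have := mem_Bge.1 hx'
    rw [mem_Bexact.1 (hS.1 hx)] at this
    omega
  refine ⟨Bge k (n + 1) (r + 1) ∪ S, hS.isCompressed_Bge_union, ?_, Finset.subset_union_left,
    Finset.union_subset (fun x hx => mem_Bge.2 (Nat.le_of_succ_le (mem_Bge.1 hx))) hS_Bge, ?_⟩
  · rw [Finset.card_union_of_disjoint hdisj, hScard]
    omega
  · refine Finset.card_le_card ?_
    rw [dShadow_union]
    refine Finset.union_subset (fun z hz => ?_) ((dShadow_mono hST).trans hTshadow)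
    have := mem_Bge.1 (dShadow_subset_Bge subset_rfl hz)
    exact hA'.mem_dShadow_of_add_two_le hx₀ (by omega)

/-- **Claim 5, second part.** Let `k ≥ 2`, `n ≥ 2` and let `A' ⊆ [k]^n` be compressed
with `|B_{≥ r+1}| < |A'| ≤ |B_{≥ r}|` for some `0 ≤ r ≤ n`. Then there is a compressed
set `A` with `|A| = |A'|`, `B_{≥ r+1} ⊆ A ⊆ B_{≥ r}` and `|d(A')| ≥ |d(A)|`.
(Dimension `n ≥ 2` is rendered as `n + 1` with `n ≥ 1`, so `r ≤ n + 1`;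
alphabet `[k]` with `k ≥ 2` as `Fin (k+1)` with `k ≥ 1`.) -/
theorem claim5_second (k n r : ℕ) (hk : 1 ≤ k) (hn : 1 ≤ n) (hr : r ≤ n + 1)
    (A' : Finset (Fin (n + 1) → Fin (k + 1))) (hA' : IsCompressed A')
    (h1 : (Bge k (n + 1) (r + 1)).card < A'.card)
    (h2 : A'.card ≤ (Bge k (n + 1) r).card) :
    ∃ A : Finset (Fin (n + 1) → Fin (k + 1)),
      IsCompressed A ∧ A.card = A'.card ∧
      Bge k (n + 1) (r + 1) ⊆ A ∧ A ⊆ Bge k (n + 1) r ∧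
      (dShadow A).card ≤ (dShadow A').card :=
  claim5_second_general k n r A' hA' h1 h2
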